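/- The Appell subgroup A = {(b | g; t, t, …, t)} of the multiple almost-Riordan group is a normal subgroup, the Lagrange subgroup L = {(1 | 1; f₁, …, f_ℓ)} is a subgroup, and the multiple almost-Riordan group is the (internal) semidirect product A ⋊ L: every element factors uniquely as an element of A times an element of L, and A ∩ L is trivial. -/

import Mathlib

open PowerSeries

/-- Composition `g ∘ f` of formal power series (meaningful when `f` has zero
constant term). -/
noncomputable def pcomp {K : Type*} [Field K] (g f : PowerSeries K) : PowerSeries K :=
  PowerSeries.mk fun n => ∑ k ∈ Finset.range (n + 1), coeff k g * coeff n (f ^ k)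

/-- `f/t`: the coefficient shift of a power series. -/
noncomputable def pdivX {K : Type*} [Field K] (f : PowerSeries K) : PowerSeries K :=
  PowerSeries.mk fun n => coeff (n + 1) f

/-- `g ∈ K[[t^ℓ]]`. -/
def InTl {K : Type*} [Field K] (ℓ : ℕ) (g : PowerSeries K) : Prop :=
  ∀ n : ℕ, ¬ ℓ ∣ n → coeff n g = 0

/-- A normalized multiplier function: `f ∈ t·K[[t^ℓ]]` with `f'(0) = 1`. -/
def IsMultN {K : Type*} [Field K] (ℓ : ℕ) (f : PowerSeries K) : Prop :=
  constantCoeff f = 0 ∧ (∀ n : ℕ, n % ℓ ≠ 1 % ℓ → coeff n f = 0) ∧ coeff 1 f = 1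


/-- The underlying data of a multiple almost-Riordan array `(b | g; f₁,…,f_ℓ, h)`. -/
abbrev MaR (K : Type*) [Field K] (m : ℕ) :=
  PowerSeries K × PowerSeries K × (Fin (m + 1) → PowerSeries K) × PowerSeries K

/-- A normalized multiple almost-Riordan array `(b | g; f₁, …, f_ℓ)` (with
`ℓ = m + 1`, constant terms of `b, g` equal to `1`), together with its chosen
normalized `ℓ`-th root `h` of `f₁⋯f_ℓ`. -/
def IsMaRN {K : Type*} [Field K] (m : ℕ)
    (p : MaR K m) : Prop :=
  InTl (m + 1) p.1 ∧ constantCoeff p.1 = 1 ∧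
    InTl (m + 1) p.2.1 ∧ constantCoeff p.2.1 = 1 ∧
    (∀ j, IsMultN (m + 1) (p.2.2.1 j)) ∧ IsMultN (m + 1) p.2.2.2 ∧
    p.2.2.2 ^ (m + 1) = ∏ j, p.2.2.1 j

/-- The multiple almost-Riordan product. -/
noncomputable def maMul {K : Type*} [Field K] {m : ℕ}
    (p q : MaR K m) : MaR K m :=
  (C (constantCoeff q.1) * p.1 +
      p.2.1 * (pdivX (p.2.2.1 (Fin.last m)))⁻¹ *
        (pcomp q.1 p.2.2.2 - C (constantCoeff q.1)),
    p.2.1 * pcomp q.2.1 p.2.2.2,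
    fun j => pdivX (p.2.2.1 j) * (pdivX p.2.2.2)⁻¹ * pcomp (q.2.2.1 j) p.2.2.2,
    pcomp q.2.2.2 p.2.2.2)

/-- The Appell part: `(b | g; t, …, t)`. -/
def IsA {K : Type*} [Field K] (m : ℕ)
    (p : MaR K m) : Prop :=
  IsMaRN m p ∧ (∀ j, p.2.2.1 j = X) ∧ p.2.2.2 = X

/-- The Lagrange part: `(1 | 1; f₁, …, f_ℓ)`. -/
def IsL {K : Type*} [Field K] (m : ℕ)
    (p : MaR K m) : Prop :=
  IsMaRN m p ∧ p.1 = 1 ∧ p.2.1 = 1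

/-!
Composition `pcomp g f` agrees with `PowerSeries.subst` when `f(0) = 0`, so it is a ring
homomorphism in `g`, it is associative, and a normalized `h` has a two-sided compositional inverse
(`PowerSeries.substInvOfIsUnit`). The residue conditions (`K[[t^ℓ]]`, `t·K[[t^ℓ]]`) are stable
under products, inverses, `f ↦ f/t` and composition, which gives closure of the group under the
product and of `A` and `L` under products and inverses; the `ℓ`-th root condition for a product
follows from `(h/t)^ℓ = ∏ f_j/t`.

The multiplier part `(f₁/h·k₁(h), …, fₗ/h·kₗ(h); u(h))` of a product depends only on the
multiplier parts of the factors, and multiplying on the right by an Appell element does not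
change it, since `f_j/h · h = f_j`. Hence `p a p⁻¹` has the multiplier part of `p p⁻¹ = 1`,
i.e. it is Appell. Finally `(b | g; t, …, t)(1 | 1; f; h) = (b | g; f; h)`, which gives both
existence and uniqueness of the factorization.
-/

section

variable {K : Type*} [Field K]

@[simp]
lemma coeff_pdivX (f : K⟦X⟧) (n : ℕ) : coeff n (pdivX f) = coeff (n + 1) f :=
  coeff_mk _ _

lemma constantCoeff_pdivX (f : K⟦X⟧) : constantCoeff (pdivX f) = coeff 1 f := by
  rw [← coeff_zero_eq_constantCoeff_apply, coeff_pdivX]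

lemma X_mul_pdivX {f : K⟦X⟧} (hf : constantCoeff f = 0) : X * pdivX f = f := by
  ext (_ | n)
  · simp [hf]
  · rw [coeff_succ_X_mul, coeff_pdivX]

lemma pdivX_X_mul (f : K⟦X⟧) : pdivX (X * f) = f := by
  ext n
  rw [coeff_pdivX, coeff_succ_X_mul]

lemma pdivX_X : pdivX (X : K⟦X⟧) = 1 := by
  simpa using pdivX_X_mul (1 : K⟦X⟧)

lemma pdivX_mul_of_constantCoeff_eq_zero (a : K⟦X⟧) {f : K⟦X⟧} (hf : constantCoeff f = 0) :
    pdivX (a * f) = a * pdivX f := by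
  rw [← X_mul_pdivX hf, mul_left_comm, pdivX_X_mul, pdivX_X_mul]

lemma coeff_pow_of_constantCoeff_eq_zero {f : K⟦X⟧} (hf : constantCoeff f = 0) (k n : ℕ) :
    coeff n (f ^ k) = if k ≤ n then coeff (n - k) (pdivX f ^ k) else 0 := by
  rw [← X_mul_pdivX hf, mul_pow, coeff_X_pow_mul', pdivX_X_mul]

lemma coeff_pow_self_of_constantCoeff_eq_zero {f : K⟦X⟧} (hf : constantCoeff f = 0) (n : ℕ) :
    coeff n (f ^ n) = coeff 1 f ^ n := by
  rw [coeff_pow_of_constantCoeff_eq_zero hf, if_pos le_rfl, Nat.sub_self,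
    coeff_zero_eq_constantCoeff_apply, map_pow, constantCoeff_pdivX]

lemma pdivX_pow_eq_prod_pdivX {ι : Type*} [Fintype ι] {h : K⟦X⟧} {f : ι → K⟦X⟧}
    (hh : constantCoeff h = 0) (hf : ∀ j, constantCoeff (f j) = 0)
    (hroot : h ^ Fintype.card ι = ∏ j, f j) :
    pdivX h ^ Fintype.card ι = ∏ j, pdivX (f j) := by
  refine mul_left_cancel₀ (pow_ne_zero (Fintype.card ι) (X_ne_zero (R := K))) ?_
  rw [← mul_pow, X_mul_pdivX hh, hroot, ← Finset.card_univ, ← Finset.prod_const,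
    ← Finset.prod_mul_distrib]
  exact Finset.prod_congr rfl fun j _ => (X_mul_pdivX (hf j)).symm

@[simp]
lemma coeff_pcomp (g f : K⟦X⟧) (n : ℕ) :
    coeff n (pcomp g f) = ∑ k ∈ Finset.range (n + 1), coeff k g * coeff n (f ^ k) :=
  coeff_mk _ _

lemma pcomp_eq_subst (g : K⟦X⟧) {f : K⟦X⟧} (hf : constantCoeff f = 0) :
    pcomp g f = g.subst f := by
  ext n
  rw [coeff_pcomp, coeff_subst' (HasSubst.of_constantCoeff_zero' hf),
    finsum_eq_sum_of_support_subset _ (s := Finset.range (n + 1))]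
  · simp only [smul_eq_mul]
  · intro k hk
    rw [Function.mem_support, coeff_pow_of_constantCoeff_eq_zero hf] at hk
    simp only [Finset.coe_range, Set.mem_Iio]
    by_contra hkn
    simp [if_neg (show ¬k ≤ n by omega)] at hk

lemma constantCoeff_pcomp (g f : K⟦X⟧) : constantCoeff (pcomp g f) = constantCoeff g := by
  rw [← coeff_zero_eq_constantCoeff_apply, coeff_pcomp]
  simp

lemma coeff_one_pcomp (g f : K⟦X⟧) : coeff 1 (pcomp g f) = coeff 1 g * coeff 1 f := by
  simp [Finset.sum_range_succ, coeff_one]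

lemma one_pcomp (f : K⟦X⟧) : pcomp 1 f = 1 := by
  ext n
  simp [coeff_one, Finset.sum_ite_eq']

lemma pcomp_X (g : K⟦X⟧) : pcomp g X = g := by
  rw [pcomp_eq_subst g constantCoeff_X, X_subst]

lemma X_pcomp {f : K⟦X⟧} (hf : constantCoeff f = 0) : pcomp X f = f := by
  rw [pcomp_eq_subst X hf, subst_X (HasSubst.of_constantCoeff_zero' hf)]

noncomputable def pcompRingHom (f : K⟦X⟧) (hf : constantCoeff f = 0) :
    K⟦X⟧ →+* K⟦X⟧ :=
  (substAlgHom (HasSubst.of_constantCoeff_zero' hf)).toRingHom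

lemma pcompRingHom_apply {f : K⟦X⟧} (hf : constantCoeff f = 0) (g : K⟦X⟧) :
    pcompRingHom f hf g = pcomp g f := by
  rw [pcomp_eq_subst g hf, pcompRingHom, AlgHom.toRingHom_eq_coe, AlgHom.coe_toRingHom,
    coe_substAlgHom]

lemma pcomp_mul (a b : K⟦X⟧) {f : K⟦X⟧} (hf : constantCoeff f = 0) :
    pcomp (a * b) f = pcomp a f * pcomp b f := by
  simp only [← pcompRingHom_apply hf, map_mul]

lemma pcomp_pow (a : K⟦X⟧) (k : ℕ) {f : K⟦X⟧} (hf : constantCoeff f = 0) :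
    pcomp (a ^ k) f = pcomp a f ^ k := by
  simp only [← pcompRingHom_apply hf, map_pow]

lemma pcomp_prod {ι : Type*} (s : Finset ι) (a : ι → K⟦X⟧) {f : K⟦X⟧}
    (hf : constantCoeff f = 0) : pcomp (∏ j ∈ s, a j) f = ∏ j ∈ s, pcomp (a j) f := by
  simp only [← pcompRingHom_apply hf, map_prod]

lemma pcomp_inv {a : K⟦X⟧} (ha : constantCoeff a ≠ 0) {f : K⟦X⟧}
    (hf : constantCoeff f = 0) :
    pcomp a⁻¹ f = (pcomp a f)⁻¹ := by
  rw [PowerSeries.eq_inv_iff_mul_eq_one (by rwa [constantCoeff_pcomp]), ← pcomp_mul _ _ hf,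
    PowerSeries.inv_mul_cancel a ha, one_pcomp]

lemma pcomp_pcomp (a : K⟦X⟧) {b c : K⟦X⟧} (hb : constantCoeff b = 0)
    (hc : constantCoeff c = 0) : pcomp (pcomp a b) c = pcomp a (pcomp b c) := by
  have hbc : constantCoeff (pcomp b c) = 0 := by rw [constantCoeff_pcomp, hb]
  rw [pcomp_eq_subst _ hc, pcomp_eq_subst _ hb, pcomp_eq_subst _ hbc, pcomp_eq_subst _ hc,
    subst_comp_subst_apply (HasSubst.of_constantCoeff_zero' hb)
      (HasSubst.of_constantCoeff_zero' hc)]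

lemma pcomp_eq_mul_pcomp_pdivX {g f : K⟦X⟧} (hg : constantCoeff g = 0)
    (hf : constantCoeff f = 0) : pcomp g f = f * pcomp (pdivX g) f := by
  conv_lhs => rw [← X_mul_pdivX hg]
  rw [pcomp_mul _ _ hf, X_pcomp hf]

lemma exists_pcomp_inverse {h : K⟦X⟧} (h0 : constantCoeff h = 0) (h1 : coeff 1 h ≠ 0) :
    ∃ u, constantCoeff u = 0 ∧ pcomp h u = X ∧ pcomp u h = X := by
  have hunit : IsUnit (coeff 1 h) := h1.isUnit
  have hu0 := constantCoeff_substInvOfIsUnit h hunit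
  refine ⟨_, hu0, ?_, ?_⟩
  · rw [pcomp_eq_subst _ hu0, subst_substInvOfIsUnit_right h h0]
  · rw [pcomp_eq_subst _ h0, subst_substInvOfIsUnit_left h h0]

/-- `DegreesModEq ℓ 0` is `K[[t^ℓ]]` and `DegreesModEq ℓ 1` is `t·K[[t^ℓ]]`. -/
def DegreesModEq (ℓ r : ℕ) (f : K⟦X⟧) : Prop :=
  ∀ n, ¬ n ≡ r [MOD ℓ] → coeff n f = 0

section

variable {ℓ r s : ℕ} {a b f g : K⟦X⟧}

lemma inTl_iff_degreesModEq_zero : InTl ℓ g ↔ DegreesModEq ℓ 0 g := by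
  simp only [InTl, DegreesModEq, Nat.modEq_zero_iff_dvd]

lemma degreesModEq_C (c : K) : DegreesModEq ℓ 0 (C c) := by
  intro n hn
  rw [coeff_C, if_neg]
  rintro rfl
  exact hn rfl

lemma degreesModEq_one : DegreesModEq ℓ 0 (1 : K⟦X⟧) := by
  simpa using degreesModEq_C (ℓ := ℓ) (1 : K)

lemma degreesModEq_X : DegreesModEq ℓ 1 (X : K⟦X⟧) := by
  intro n hn
  rw [coeff_X, if_neg]
  rintro rfl
  exact hn rfl

lemma DegreesModEq.add (ha : DegreesModEq ℓ r a) (hb : DegreesModEq ℓ r b) :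
    DegreesModEq ℓ r (a + b) := fun n hn => by
  rw [map_add, ha n hn, hb n hn, add_zero]

lemma DegreesModEq.sub (ha : DegreesModEq ℓ r a) (hb : DegreesModEq ℓ r b) :
    DegreesModEq ℓ r (a - b) := fun n hn => by
  rw [map_sub, ha n hn, hb n hn, sub_zero]

lemma DegreesModEq.mul (ha : DegreesModEq ℓ r a) (hb : DegreesModEq ℓ s b) :
    DegreesModEq ℓ (r + s) (a * b) := by
  intro n hn
  rw [coeff_mul]
  refine Finset.sum_eq_zero fun ⟨i, j⟩ hij => ?_
  rw [Finset.HasAntidiagonal.mem_antidiagonal] at hij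
  by_cases hi : i ≡ r [MOD ℓ]
  · by_cases hj : j ≡ s [MOD ℓ]
    · exact absurd (hij ▸ hi.add hj) hn
    · rw [hb j hj, mul_zero]
  · rw [ha i hi, zero_mul]

lemma DegreesModEq.pow (hf : DegreesModEq ℓ r f) (k : ℕ) :
    DegreesModEq ℓ (k * r) (f ^ k) := by
  induction k with
  | zero => simpa using degreesModEq_one
  | succ k ih => simpa [pow_succ, add_mul] using ih.mul hf

lemma DegreesModEq.inv (hg : DegreesModEq ℓ 0 g) : DegreesModEq ℓ 0 g⁻¹ := by
  intro n
  induction n using Nat.strong_induction_on with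
  | _ n ih =>
    intro hn
    have hn0 : n ≠ 0 := by
      rintro rfl
      exact hn rfl
    rw [coeff_inv, if_neg hn0, Finset.sum_eq_zero, mul_zero]
    rintro ⟨i, j⟩ hij
    rw [Finset.HasAntidiagonal.mem_antidiagonal] at hij
    split_ifs with hjn
    · by_cases hi : i ≡ 0 [MOD ℓ]
      · rw [ih j hjn fun hj => hn (by simpa [hij] using hi.add hj), mul_zero]
      · rw [hg i hi, zero_mul]
    · rfl

lemma DegreesModEq.pdivX (hf : DegreesModEq ℓ (r + 1) f) : DegreesModEq ℓ r (pdivX f) :=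
  fun n hn => by
    rw [coeff_pdivX]
    exact hf (n + 1) fun h => hn (Nat.ModEq.add_right_cancel' 1 h)

lemma DegreesModEq.pcomp (hg : DegreesModEq ℓ r g) (hf : DegreesModEq ℓ 1 f) :
    DegreesModEq ℓ r (pcomp g f) := by
  intro n hn
  rw [coeff_pcomp]
  refine Finset.sum_eq_zero fun k _ => ?_
  by_cases hk : k ≡ r [MOD ℓ]
  · rw [(hf.pow k) n fun h => hn ((by simpa using h : n ≡ k [MOD ℓ]).trans hk), mul_zero]
  · rw [hg k hk, zero_mul]

/-- In degree `n ≠ 1`, `u ∘ h = X` reads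
`coeff n u + ∑_{k<n} coeff k u * coeff n (h ^ k) = 0`,
and each term of the sum vanishes by induction or by the residue of `h ^ k`. -/
lemma degreesModEq_of_pcomp_eq_X {u h : K⟦X⟧} (hh : DegreesModEq ℓ 1 h)
    (h0 : constantCoeff h = 0) (h1 : coeff 1 h = 1) (hu : pcomp u h = X) :
    DegreesModEq ℓ 1 u := by
  intro n
  induction n using Nat.strong_induction_on with
  | _ n ih =>
    intro hn
    have hn1 : n ≠ 1 := by
      rintro rfl
      exact hn rfl
    have hcoeff := congrArg (coeff n) hu
    rw [coeff_pcomp, Finset.sum_range_succ, coeff_X, if_neg hn1,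
      coeff_pow_self_of_constantCoeff_eq_zero h0, h1, one_pow, mul_one,
      Finset.sum_eq_zero, zero_add] at hcoeff
    · exact hcoeff
    intro k hk
    rw [Finset.mem_range] at hk
    by_cases hk1 : k ≡ 1 [MOD ℓ]
    · rw [(hh.pow k) n fun h => hn ((by simpa using h : n ≡ k [MOD ℓ]).trans hk1), mul_zero]
    · rw [ih k hk hk1, zero_mul]

end

lemma prod_mul_inv_mul_of_prod_eq {ι : Type*} (s : Finset ι) {a b c : ι → K⟦X⟧}
    (hb : ∀ j ∈ s, constantCoeff (b j) ≠ 0) (hab : ∏ j ∈ s, a j = ∏ j ∈ s, b j) :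
    ∏ j ∈ s, a j * (b j)⁻¹ * c j = ∏ j ∈ s, c j := by
  rw [Finset.prod_mul_distrib, Finset.prod_mul_distrib, hab, ← Finset.prod_mul_distrib,
    Finset.prod_congr rfl fun j hj => PowerSeries.mul_inv_cancel _ (hb j hj),
    Finset.prod_const_one, one_mul]

variable {ℓ : ℕ} {f h k r : K⟦X⟧}

lemma isMultN_X : IsMultN ℓ (X : K⟦X⟧) :=
  ⟨constantCoeff_X, degreesModEq_X, coeff_one_X⟩

lemma IsMultN.degreesModEq (hf : IsMultN ℓ f) : DegreesModEq ℓ 1 f :=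
  hf.2.1

lemma IsMultN.constantCoeff_pdivX_eq_one (hf : IsMultN ℓ f) : constantCoeff (pdivX f) = 1 := by
  rw [constantCoeff_pdivX, hf.2.2]

lemma IsMultN.constantCoeff_pdivX_ne_zero (hf : IsMultN ℓ f) : constantCoeff (pdivX f) ≠ 0 := by
  rw [hf.constantCoeff_pdivX_eq_one]
  exact one_ne_zero

lemma IsMultN.degreesModEq_pdivX (hf : IsMultN ℓ f) : DegreesModEq ℓ 0 (pdivX f) :=
  hf.degreesModEq.pdivX

lemma IsMultN.mul_left (hr : DegreesModEq ℓ 0 r) (hr1 : constantCoeff r = 1)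
    (hk : IsMultN ℓ k) : IsMultN ℓ (r * k) := by
  refine ⟨by rw [map_mul, hk.1, mul_zero], hr.mul hk.degreesModEq, ?_⟩
  rw [coeff_one_mul, hk.1, hk.2.2, hr1, mul_zero, zero_add, one_mul]

lemma IsMultN.pdivX_mul_inv_mul (hf : IsMultN ℓ f) (hh : IsMultN ℓ h) (hk : IsMultN ℓ k) :
    IsMultN ℓ (pdivX f * (pdivX h)⁻¹ * k) :=
  IsMultN.mul_left (hf.degreesModEq_pdivX.mul hh.degreesModEq_pdivX.inv)
    (by rw [map_mul, constantCoeff_inv, hf.constantCoeff_pdivX_eq_one,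
      hh.constantCoeff_pdivX_eq_one, inv_one, mul_one]) hk

lemma IsMultN.comp (hk : IsMultN ℓ k) (hh : IsMultN ℓ h) : IsMultN ℓ (pcomp k h) :=
  ⟨by rw [constantCoeff_pcomp, hk.1], hk.degreesModEq.pcomp hh.degreesModEq,
    by rw [coeff_one_pcomp, hk.2.2, hh.2.2, one_mul]⟩

lemma IsMultN.exists_inverse (hh : IsMultN ℓ h) :
    ∃ u, IsMultN ℓ u ∧ pcomp h u = X ∧ pcomp u h = X := by
  obtain ⟨u, hu0, hhu, huh⟩ := exists_pcomp_inverse hh.1 (by rw [hh.2.2]; exact one_ne_zero)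
  have hu1 : coeff 1 u = 1 := by
    have := congrArg (coeff 1) huh
    rwa [coeff_one_pcomp, hh.2.2, mul_one, coeff_one_X] at this
  exact ⟨u, ⟨hu0, degreesModEq_of_pcomp_eq_X hh.degreesModEq hh.1 hh.2.2 huh, hu1⟩,
    hhu, huh⟩

end

noncomputable abbrev maOne (K : Type*) [Field K] (m : ℕ) : MaR K m := (1, 1, fun _ => X, X)

section

variable {K : Type*} [Field K] {m : ℕ}

lemma maMul_mk (b g c d : K⟦X⟧) (f k : Fin (m + 1) → K⟦X⟧) (h u : K⟦X⟧) :
    maMul (b, g, f, h) (c, d, k, u) =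
      (C (constantCoeff c) * b +
          g * (pdivX (f (Fin.last m)))⁻¹ * (pcomp c h - C (constantCoeff c)),
        g * pcomp d h, fun j => pdivX (f j) * (pdivX h)⁻¹ * pcomp (k j) h, pcomp u h) :=
  rfl

lemma maMul_appell_appell (b g c d : K⟦X⟧) :
    maMul ((b, g, fun _ => X, X) : MaR K m) (c, d, fun _ => X, X) =
      (C (constantCoeff c) * b + g * (c - C (constantCoeff c)), g * d, fun _ => X, X) := by
  simp [maMul_mk, pdivX_X, pcomp_X]

lemma maMul_appell_lagrange (b g : K⟦X⟧) (f : Fin (m + 1) → K⟦X⟧) (h : K⟦X⟧) :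
    maMul ((b, g, fun _ => X, X) : MaR K m) (1, 1, f, h) = (b, g, f, h) := by
  simp [maMul_mk, pdivX_X, pcomp_X]

lemma maMul_lagrange_lagrange (f k : Fin (m + 1) → K⟦X⟧) (h u : K⟦X⟧) :
    maMul ((1, 1, f, h) : MaR K m) (1, 1, k, u) =
      (1, 1, fun j => pdivX (f j) * (pdivX h)⁻¹ * pcomp (k j) h, pcomp u h) := by
  simp [maMul_mk, one_pcomp]

lemma maMul_snd_snd_congr {p p' : MaR K m} (hpp' : p.2.2 = p'.2.2) (q : MaR K m) :
    (maMul p q).2.2 = (maMul p' q).2.2 := by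
  obtain ⟨b, g, f, h⟩ := p
  obtain ⟨b', g', f', h'⟩ := p'
  obtain ⟨rfl, rfl⟩ := Prod.ext_iff.1 hpp'
  rfl

lemma IsMaRN.pdivX_pow {p : MaR K m} (hp : IsMaRN m p) :
    pdivX p.2.2.2 ^ (m + 1) = ∏ j, pdivX (p.2.2.1 j) := by
  obtain ⟨-, -, -, -, hf, hh, hroot⟩ := hp
  simpa using pdivX_pow_eq_prod_pdivX hh.1 (fun j => (hf j).1) (by simpa using hroot)

lemma IsMaRN.mul {p q : MaR K m} (hp : IsMaRN m p) (hq : IsMaRN m q) :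
    IsMaRN m (maMul p q) := by
  have hroot := hp.pdivX_pow
  obtain ⟨b, g, f, h⟩ := p
  obtain ⟨c, d, k, u⟩ := q
  obtain ⟨hb, hb1, hg, hg1, hf, hh, -⟩ := hp
  obtain ⟨hc, hc1, hd, hd1, hk, hu, hroot'⟩ := hq
  rw [inTl_iff_degreesModEq_zero] at hb hg hc hd
  rw [maMul_mk]
  refine ⟨?_, ?_, ?_, ?_, fun j => (hf j).pdivX_mul_inv_mul hh ((hk j).comp hh), hu.comp hh, ?_⟩
  · rw [inTl_iff_degreesModEq_zero]
    exact ((degreesModEq_C _).mul hb).add ((hg.mul (hf _).degreesModEq_pdivX.inv).mul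
      ((hc.pcomp hh.degreesModEq).sub (degreesModEq_C _)))
  · simp [constantCoeff_pcomp, hb1, hc1, hg1]
  · rw [inTl_iff_degreesModEq_zero]
    exact hg.mul (hd.pcomp hh.degreesModEq)
  · simp [constantCoeff_pcomp, hg1, hd1]
  · dsimp only at hroot hroot' ⊢
    rw [← pcomp_pow _ _ hh.1, hroot', pcomp_prod _ _ hh.1,
      prod_mul_inv_mul_of_prod_eq _ (fun _ _ => hh.constantCoeff_pdivX_ne_zero)]
    rw [← hroot, Finset.prod_const, Finset.card_univ, Fintype.card_fin]

lemma isA_mk {b g : K⟦X⟧} (hb : InTl (m + 1) b) (hb1 : constantCoeff b = 1)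
    (hg : InTl (m + 1) g) (hg1 : constantCoeff g = 1) : IsA m (b, g, fun _ => X, X) :=
  ⟨⟨hb, hb1, hg, hg1, fun _ => isMultN_X, isMultN_X, by simp⟩, fun _ => rfl, rfl⟩

lemma isL_mk {f : Fin (m + 1) → K⟦X⟧} {h : K⟦X⟧} (hf : ∀ j, IsMultN (m + 1) (f j))
    (hh : IsMultN (m + 1) h) (hroot : h ^ (m + 1) = ∏ j, f j) : IsL m (1, 1, f, h) :=
  ⟨⟨inTl_iff_degreesModEq_zero.2 degreesModEq_one, map_one _,
    inTl_iff_degreesModEq_zero.2 degreesModEq_one, map_one _, hf, hh, hroot⟩, rfl, rfl⟩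

lemma isA_maOne : IsA m (maOne K m) :=
  isA_mk (inTl_iff_degreesModEq_zero.2 degreesModEq_one) (map_one _)
    (inTl_iff_degreesModEq_zero.2 degreesModEq_one) (map_one _)

lemma isL_maOne : IsL m (maOne K m) :=
  isL_mk (fun _ => isMultN_X) isMultN_X (by simp)

lemma IsA.mul {p q : MaR K m} (hp : IsA m p) (hq : IsA m q) : IsA m (maMul p q) := by
  obtain ⟨b, g, f, h⟩ := p
  obtain ⟨c, d, k, u⟩ := q
  obtain ⟨hpN, hf, rfl : h = X⟩ := hp
  obtain ⟨hqN, hk, rfl : u = X⟩ := hq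
  obtain rfl : f = fun _ => X := funext hf
  obtain rfl : k = fun _ => X := funext hk
  refine ⟨hpN.mul hqN, ?_⟩
  rw [maMul_appell_appell]
  exact ⟨fun _ => rfl, rfl⟩

lemma IsA.exists_inverse {p : MaR K m} (hp : IsA m p) :
    ∃ q, IsA m q ∧ maMul p q = maOne K m ∧ maMul q p = maOne K m := by
  obtain ⟨b, g, f, h⟩ := p
  obtain ⟨⟨hb : InTl (m + 1) b, hb1 : constantCoeff b = 1, hg : InTl (m + 1) g,
    hg1 : constantCoeff g = 1, -⟩, hf, rfl : h = X⟩ := hp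
  obtain rfl : f = fun _ => X := funext hf
  rw [inTl_iff_degreesModEq_zero] at hb hg
  have hgg : g * g⁻¹ = 1 := PowerSeries.mul_inv_cancel g (by rw [hg1]; exact one_ne_zero)
  have hc1 : constantCoeff (1 + g⁻¹ * (1 - b)) = 1 := by simp [hb1, hg1]
  refine ⟨((1 + g⁻¹ * (1 - b), g⁻¹, fun _ => X, X) : MaR K m),
    isA_mk (inTl_iff_degreesModEq_zero.2 (degreesModEq_one.add
      (hg.inv.mul (degreesModEq_one.sub hb)))) hc1 (inTl_iff_degreesModEq_zero.2 hg.inv)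
      (by simp [hg1]), ?_, ?_⟩
  · rw [maMul_appell_appell, hc1, map_one, hgg]
    congr 1
    linear_combination (1 - b) * hgg
  · rw [maMul_appell_appell, hb1, map_one, mul_comm g⁻¹ g, hgg]
    congr 1
    ring

lemma IsMaRN.snd_snd_maMul_of_isA {p a : MaR K m} (hp : IsMaRN m p) (ha : IsA m a) :
    (maMul p a).2.2 = p.2.2 := by
  obtain ⟨b, g, f, h⟩ := p
  obtain ⟨c, d, k, u⟩ := a
  obtain ⟨-, hk, rfl : u = X⟩ := ha
  obtain rfl : k = fun _ => X := funext hk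
  obtain ⟨-, -, -, -, hf, hh, -⟩ := hp
  rw [maMul_mk, X_pcomp hh.1]
  refine Prod.ext (funext fun j => ?_) rfl
  linear_combination (-(pdivX (f j) * (pdivX h)⁻¹)) * X_mul_pdivX hh.1 +
    (X * pdivX (f j)) * PowerSeries.mul_inv_cancel _ hh.constantCoeff_pdivX_ne_zero +
    X_mul_pdivX (hf j).1

lemma IsA.conj {p a q : MaR K m} (ha : IsA m a) (hp : IsMaRN m p) (hq : IsMaRN m q)
    (hpq : maMul p q = maOne K m) : IsA m (maMul (maMul p a) q) := by
  have key : (maMul (maMul p a) q).2.2 = (fun _ => X, X) := by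
    rw [maMul_snd_snd_congr (hp.snd_snd_maMul_of_isA ha), hpq]
  exact ⟨(hp.mul ha.1).mul hq, fun j => congrFun (congrArg Prod.fst key) j,
    congrArg Prod.snd key⟩

lemma IsL.mul {p q : MaR K m} (hp : IsL m p) (hq : IsL m q) : IsL m (maMul p q) := by
  obtain ⟨b, g, f, h⟩ := p
  obtain ⟨c, d, k, u⟩ := q
  obtain ⟨hpN, rfl : b = 1, rfl : g = 1⟩ := hp
  obtain ⟨hqN, rfl : c = 1, rfl : d = 1⟩ := hq
  refine ⟨hpN.mul hqN, ?_⟩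
  rw [maMul_lagrange_lagrange]
  exact ⟨rfl, rfl⟩

lemma IsL.exists_inverse {p : MaR K m} (hp : IsL m p) :
    ∃ q, IsL m q ∧ maMul p q = maOne K m ∧ maMul q p = maOne K m := by
  have hpow : pdivX p.2.2.2 ^ (m + 1) = ∏ j, pdivX (p.2.2.1 j) := hp.1.pdivX_pow
  obtain ⟨b, g, f, h⟩ := p
  obtain ⟨⟨-, -, -, -, hf : ∀ j, IsMultN (m + 1) (f j), hh : IsMultN (m + 1) h, -⟩,
    rfl : b = 1, rfl : g = 1⟩ := hp
  obtain ⟨u, hu, hhu, huh⟩ := hh.exists_inverse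
  obtain ⟨k, hk⟩ : ∃ k : Fin (m + 1) → K⟦X⟧,
      ∀ j, k j = pcomp (pdivX h * (pdivX (f j))⁻¹ * X) u :=
    ⟨_, fun _ => rfl⟩
  have hkMult : ∀ j, IsMultN (m + 1) (k j) := fun j => by
    rw [hk j]
    exact (hh.pdivX_mul_inv_mul (hf j) isMultN_X).comp hu
  have hkroot : u ^ (m + 1) = ∏ j, k j := by
    rw [Finset.prod_congr rfl fun j _ => hk j, ← pcomp_prod _ _ hu.1,
      prod_mul_inv_mul_of_prod_eq _ (fun j _ => (hf j).constantCoeff_pdivX_ne_zero)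
        (by simpa using hpow),
      Finset.prod_const, Finset.card_univ, Fintype.card_fin, pcomp_pow _ _ hu.1, X_pcomp hu.1]
  refine ⟨((1, 1, k, u) : MaR K m), isL_mk hkMult hu hkroot, ?_, ?_⟩
  · rw [maMul_lagrange_lagrange, huh]
    congr 2
    refine Prod.ext (funext fun j => ?_) rfl
    dsimp only
    rw [hk, pcomp_pcomp _ hu.1 hh.1, huh, pcomp_X]
    linear_combination (X * pdivX (f j) * (pdivX (f j))⁻¹) *
        PowerSeries.mul_inv_cancel _ hh.constantCoeff_pdivX_ne_zero +
      X * PowerSeries.mul_inv_cancel _ (hf j).constantCoeff_pdivX_ne_zero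
  · rw [maMul_lagrange_lagrange, hhu]
    congr 2
    refine Prod.ext (funext fun j => ?_) rfl
    dsimp only
    have hF : constantCoeff (pcomp (pdivX (f j)) u) ≠ 0 := by
      rw [constantCoeff_pcomp]
      exact (hf j).constantCoeff_pdivX_ne_zero
    have huP : u * pcomp (pdivX h) u = X := by
      rw [← pcomp_eq_mul_pcomp_pdivX hh.1 hu.1, hhu]
    rw [hk, pcomp_mul _ _ hu.1, X_pcomp hu.1, pdivX_mul_of_constantCoeff_eq_zero _ hu.1,
      pcomp_mul _ _ hu.1, pcomp_inv (hf j).constantCoeff_pdivX_ne_zero hu.1,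
      pcomp_eq_mul_pcomp_pdivX (hf j).1 hu.1]
    linear_combination
      (u * pcomp (pdivX h) u * pcomp (pdivX (f j)) u * (pcomp (pdivX (f j)) u)⁻¹) *
          PowerSeries.mul_inv_cancel _ hu.constantCoeff_pdivX_ne_zero +
        (u * pcomp (pdivX h) u) * PowerSeries.mul_inv_cancel _ hF + huP

lemma IsMaRN.existsUnique_appell_mul_lagrange {p : MaR K m} (hp : IsMaRN m p) :
    ∃! al : MaR K m × MaR K m, IsA m al.1 ∧ IsL m al.2 ∧ p = maMul al.1 al.2 := by
  obtain ⟨b, g, f, h⟩ := p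
  obtain ⟨hb, hb1, hg, hg1, hf, hh, hroot⟩ := hp
  refine ⟨((b, g, fun _ => X, X), (1, 1, f, h)), ⟨isA_mk hb hb1 hg hg1, isL_mk hf hh hroot,
    (maMul_appell_lagrange b g f h).symm⟩, ?_⟩
  rintro ⟨⟨b', g', f', h'⟩, ⟨c, d, k, u⟩⟩
    ⟨⟨-, hf', rfl : h' = X⟩, ⟨-, rfl : c = 1, rfl : d = 1⟩, hpal⟩
  obtain rfl : f' = fun _ => X := funext hf'
  rw [maMul_appell_lagrange, Prod.mk.injEq, Prod.mk.injEq, Prod.mk.injEq] at hpal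
  obtain ⟨rfl, rfl, rfl, rfl⟩ := hpal
  rfl

lemma eq_maOne_of_isA_of_isL {p : MaR K m} (hA : IsA m p) (hL : IsL m p) : p = maOne K m :=
  Prod.ext hL.2.1 (Prod.ext hL.2.2 (Prod.ext (funext hA.2.1) hA.2.2))

end

theorem multiple_almost_riordan_semidirect_general {K : Type*} [Field K] (m : ℕ) :
    (∀ p q : MaR K m, IsA m p → IsA m q → IsA m (maMul p q)) ∧
    IsA m ((1, 1, fun _ => X, X) : MaR K m) ∧
    (∀ p : MaR K m, IsA m p → ∃ q, IsA m q ∧ maMul p q = (1, 1, fun _ => X, X) ∧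
      maMul q p = ((1, 1, fun _ => X, X) : MaR K m)) ∧
    (∀ p a q : MaR K m, IsMaRN m p → IsA m a → IsMaRN m q →
      maMul p q = (1, 1, fun _ => X, X) → maMul q p = (1, 1, fun _ => X, X) →
      IsA m (maMul (maMul p a) q)) ∧
    (∀ p q : MaR K m, IsL m p → IsL m q → IsL m (maMul p q)) ∧
    IsL m ((1, 1, fun _ => X, X) : MaR K m) ∧
    (∀ p : MaR K m, IsL m p → ∃ q, IsL m q ∧ maMul p q = (1, 1, fun _ => X, X) ∧
      maMul q p = ((1, 1, fun _ => X, X) : MaR K m)) ∧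
    (∀ p : MaR K m, IsMaRN m p →
      ∃! al : MaR K m × MaR K m,
        IsA m al.1 ∧ IsL m al.2 ∧ p = maMul al.1 al.2) ∧
    (∀ p : MaR K m, IsA m p → IsL m p →
      p = ((1, 1, fun _ => X, X) : MaR K m)) :=
  ⟨fun _ _ hp hq => hp.mul hq, isA_maOne, fun _ hp => hp.exists_inverse,
    fun _ _ _ hp ha hq hpq _ => ha.conj hp hq hpq, fun _ _ hp hq => hp.mul hq, isL_maOne,
    fun _ hp => hp.exists_inverse, fun _ hp => hp.existsUnique_appell_mul_lagrange,
    fun _ hA hL => eq_maOne_of_isA_of_isL hA hL⟩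

/-- The Appell subgroup `A` is a normal subgroup of the multiple almost-Riordan
group, the Lagrange subgroup `L` is a subgroup, and the multiple almost-Riordan
group is the internal semidirect product `A ⋊ L`: every element factors uniquely
as an element of `A` times an element of `L`, and `A ∩ L` is trivial. -/
theorem multiple_almost_riordan_semidirect {K : Type*} [Field K] [CharZero K] (m : ℕ) :
    (∀ p q : MaR K m, IsA m p → IsA m q → IsA m (maMul p q)) ∧
    IsA m ((1, 1, fun _ => X, X) : MaR K m) ∧
    (∀ p : MaR K m, IsA m p → ∃ q, IsA m q ∧ maMul p q = (1, 1, fun _ => X, X) ∧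
      maMul q p = ((1, 1, fun _ => X, X) : MaR K m)) ∧
    (∀ p a q : MaR K m, IsMaRN m p → IsA m a → IsMaRN m q →
      maMul p q = (1, 1, fun _ => X, X) → maMul q p = (1, 1, fun _ => X, X) →
      IsA m (maMul (maMul p a) q)) ∧
    (∀ p q : MaR K m, IsL m p → IsL m q → IsL m (maMul p q)) ∧
    IsL m ((1, 1, fun _ => X, X) : MaR K m) ∧
    (∀ p : MaR K m, IsL m p → ∃ q, IsL m q ∧ maMul p q = (1, 1, fun _ => X, X) ∧
      maMul q p = ((1, 1, fun _ => X, X) : MaR K m)) ∧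
    (∀ p : MaR K m, IsMaRN m p →
      ∃! al : MaR K m × MaR K m,
        IsA m al.1 ∧ IsL m al.2 ∧ p = maMul al.1 al.2) ∧
    (∀ p : MaR K m, IsA m p → IsL m p →
      p = ((1, 1, fun _ => X, X) : MaR K m)) :=
  multiple_almost_riordan_semidirect_general m
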